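/- arXiv:2205.13255 — 4 statements merged into one kernel-verified Lean document; each statement's English description precedes it below -/
import Mathlib

section
/- (Fano's inequality) Let X and Y be random variables taking values in finite sets 𝒳 and 𝒴, and let X̂ : 𝒴 → 𝒳 be any (measurable) classification rule. Let e = 1{X ≠ X̂(Y)}. Then the conditional entropy satisfies H(X | X̂(Y)) ≤ H(e) + P(e = 1)·log(|𝒳| − 1) ≤ log 2 + P(e = 1)·log|𝒳|. -/
/-!
Compare the conditional law of `X` given `Z = X̂(Y)` with Fano's reference kernel, which puts
mass `1 - Pe` on `x = z` and spreads `Pe` evenly over the other `|𝒳| - 1` values. By Gibbs'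
inequality the conditional entropy is at most the cross-entropy against this kernel, and since
the kernel is constant on the diagonal and off it, the cross-entropy only sees `Pe`: it equals
`H(e) + Pe · log(|𝒳| - 1)`, the `q`-ary entropy of `Pe`. The second bound is `H(e) ≤ log 2`.
-/

open Real Finset Classical
noncomputable section
open scoped Classical

lemma negMulLog_add_mul_log_add_mul_log_le {a s u : ℝ} (ha : 0 ≤ a) (hs : 0 ≤ s) (hu : 0 ≤ u)
    (hsu : a ≠ 0 → s ≠ 0 ∧ u ≠ 0) :
    negMulLog a + a * log s + a * log u ≤ s * u - a := by
  rcases ha.eq_or_lt with rfl | ha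
  · simpa using mul_nonneg hs hu
  obtain ⟨hs0, hu0⟩ := hsu ha.ne'
  have hpos : 0 < s * u / a := div_pos (mul_pos (hs.lt_of_ne' hs0) (hu.lt_of_ne' hu0)) ha
  calc negMulLog a + a * log s + a * log u = a * log (s * u / a) := by
        rw [log_div (mul_ne_zero hs0 hu0) ha.ne', log_mul hs0 hu0, negMulLog]; ring
    _ ≤ a * (s * u / a - 1) := mul_le_mul_of_nonneg_left (log_le_sub_one_of_pos hpos) ha.le
    _ = s * u - a := by field_simp

lemma neg_mul_log_div_le {ε : ℝ} (h0 : 0 ≤ ε) (h1 : ε ≤ 1) (k : ℝ) :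
    -(ε * log (ε / k)) ≤ negMulLog ε + ε * log k := by
  rcases eq_or_ne ε 0 with rfl | hε
  · simp
  rcases eq_or_ne k 0 with rfl | hk
  · simpa using negMulLog_nonneg h0 h1
  rw [log_div hε hk, negMulLog]
  linarith

lemma log_natCast_sub_one_le (n : ℕ) : log ((n : ℝ) - 1) ≤ log n := by
  rcases n with _ | _ | n
  · simp
  · simp
  · exact log_le_log (by push_cast; linarith) (by linarith)

lemma le_sum_sum {ι κ : Type*} [Fintype ι] [Fintype κ] {f : ι → κ → ℝ}
    (hf : ∀ i j, 0 ≤ f i j) (i : ι) (j : κ) : f i j ≤ ∑ i, ∑ j, f i j :=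
  (single_le_sum (fun j _ => hf i j) (mem_univ j)).trans
    (single_le_sum (f := fun i => ∑ j, f i j) (fun i _ => sum_nonneg fun j _ => hf i j)
      (mem_univ i))

/-- Gibbs' inequality: `H(X | Z) ≤ -∑ P(x, z) log r(x | z)` for any sub-stochastic kernel `r`. -/
theorem sum_negMulLog_add_mul_log_marginal_le {ι κ : Type*} [Fintype ι] [Fintype κ]
    (P r : ι → κ → ℝ) (hP : ∀ x z, 0 ≤ P x z) (hr : ∀ x z, 0 ≤ r x z)
    (hr1 : ∀ z, ∑ x, r x z ≤ 1) (hPr : ∀ x z, P x z ≠ 0 → r x z ≠ 0) :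
    ∑ x, ∑ z, (negMulLog (P x z) + P x z * log (∑ x', P x' z)) ≤
      ∑ x, ∑ z, -(P x z * log (r x z)) := by
  set Q : κ → ℝ := fun z => ∑ x', P x' z
  have hPQ : ∀ x z, P x z ≤ Q z := fun x z => single_le_sum (fun x' _ => hP x' z) (mem_univ x)
  have hpoint : ∀ x z, negMulLog (P x z) + P x z * log (Q z) - -(P x z * log (r x z)) ≤
      Q z * r x z - P x z := fun x z => by
    have := negMulLog_add_mul_log_add_mul_log_le (hP x z) ((hP x z).trans (hPQ x z)) (hr x z)
      fun h => ⟨((lt_of_le_of_ne (hP x z) h.symm).trans_le (hPQ x z)).ne', hPr x z h⟩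
    linarith
  have hmass : ∑ x, ∑ z, (Q z * r x z - P x z) ≤ 0 := by
    rw [sum_comm]
    refine sum_nonpos fun z _ => ?_
    rw [sum_sub_distrib, ← mul_sum]
    nlinarith [hr1 z, sum_nonneg fun x (_ : x ∈ univ) => hP x z]
  have := (sum_le_sum fun x _ => sum_le_sum fun z _ => hpoint x z).trans hmass
  simp only [sum_sub_distrib] at this
  linarith

section FanoKernel

variable {α : Type*} [Fintype α]

def fanoKernel (ε : ℝ) (x z : α) : ℝ :=
  if x = z then 1 - ε else ε / (Fintype.card α - 1)

lemma fanoKernel_nonneg {ε : ℝ} (h0 : 0 ≤ ε) (h1 : ε ≤ 1) (x z : α) : 0 ≤ fanoKernel ε x z := by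
  have : (1 : ℝ) ≤ Fintype.card α := Nat.one_le_cast.2 (Fintype.card_pos_iff.2 ⟨x⟩)
  unfold fanoKernel
  split_ifs
  exacts [sub_nonneg.2 h1, div_nonneg h0 (sub_nonneg.2 this)]

lemma sum_fanoKernel_le_one {ε : ℝ} (h0 : 0 ≤ ε) (z : α) : ∑ x, fanoKernel ε x z ≤ 1 := by
  set c : ℝ := ε / (Fintype.card α - 1)
  have hsplit : ∀ x, fanoKernel ε x z = (if x = z then 1 - ε - c else 0) + c := fun x => by
    unfold fanoKernel; split_ifs <;> ring
  have hc : (Fintype.card α - 1) * c ≤ ε := by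
    rcases eq_or_ne ((Fintype.card α : ℝ) - 1) 0 with h | h
    · rw [h, zero_mul]; exact h0
    · exact (mul_div_cancel₀ ε h).le
  simp only [hsplit, sum_add_distrib, sum_ite_eq', mem_univ, if_true, sum_const, card_univ,
    nsmul_eq_mul]
  linarith

lemma sum_neg_mul_log_fanoKernel_le (P : α → α → ℝ) {ε : ℝ} (h0 : 0 ≤ ε) (h1 : ε ≤ 1)
    (hdiag : ∑ x, ∑ z, (if x = z then P x z else 0) = 1 - ε)
    (hoff : ∑ x, ∑ z, (if x = z then 0 else P x z) = ε) :
    ∑ x, ∑ z, -(P x z * log (fanoKernel ε x z)) ≤ qaryEntropy (Fintype.card α) ε := by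
  have hsplit : ∀ x z, -(P x z * log (fanoKernel ε x z)) =
      -log (1 - ε) * (if x = z then P x z else 0) +
        -log (ε / (Fintype.card α - 1)) * (if x = z then 0 else P x z) := fun x z => by
    unfold fanoKernel; split_ifs <;> ring
  simp only [hsplit, sum_add_distrib, ← mul_sum, hdiag, hoff]
  rw [qaryEntropy, binEntropy_eq_negMulLog_add_negMulLog_one_sub]
  push_cast
  have := neg_mul_log_div_le h0 h1 ((Fintype.card α : ℝ) - 1)
  have h1ε : negMulLog (1 - ε) = -((1 - ε) * log (1 - ε)) := by rw [negMulLog, neg_mul]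
  linarith

/-- Fano's inequality for a joint law `P` of `(X, Z)` on `α × α`, the error being `X ≠ Z`. -/
theorem sum_negMulLog_add_mul_log_marginal_le_qaryEntropy (P : α → α → ℝ)
    (hP : ∀ x z, 0 ≤ P x z) (hP1 : ∑ x, ∑ z, P x z = 1) {ε : ℝ}
    (hε : ∑ x, ∑ z, (if x = z then 0 else P x z) = ε) :
    ∑ x, ∑ z, (negMulLog (P x z) + P x z * log (∑ x', P x' z)) ≤
      qaryEntropy (Fintype.card α) ε := by
  have hdiag : ∑ x, ∑ z, (if x = z then P x z else 0) = 1 - ε := by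
    have : ∀ x z, (if x = z then P x z else 0) = P x z - (if x = z then 0 else P x z) :=
      fun x z => by split_ifs <;> ring
    simp only [this, sum_sub_distrib, hP1, hε]
  have hdiag_le : ∀ x, P x x ≤ 1 - ε := fun x => by
    simpa [← hdiag] using le_sum_sum (f := fun x z => if x = z then P x z else 0)
      (fun x z => ite_nonneg (hP x z) le_rfl) x x
  have hoff_le : ∀ x z, x ≠ z → P x z ≤ ε := fun x z hxz => by
    simpa [hxz, ← hε] using le_sum_sum (f := fun x z => if x = z then 0 else P x z)
      (fun x z => ite_nonneg le_rfl (hP x z)) x z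
  have h0 : 0 ≤ ε := hε ▸ sum_nonneg fun x _ => sum_nonneg fun z _ => ite_nonneg le_rfl (hP x z)
  have h1 : ε ≤ 1 := sub_nonneg.1 <|
    hdiag ▸ sum_nonneg fun x _ => sum_nonneg fun z _ => ite_nonneg (hP x z) le_rfl
  have hsupp : ∀ x z, P x z ≠ 0 → fanoKernel ε x z ≠ 0 := fun x z hPxz => by
    have hpos := (hP x z).lt_of_ne' hPxz
    unfold fanoKernel
    split_ifs with hxz
    · subst hxz; linarith [hdiag_le x]
    · have : (1 : ℝ) < Fintype.card α := Nat.one_lt_cast.2 (Fintype.one_lt_card_iff.2 ⟨x, z, hxz⟩)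
      exact div_ne_zero (by linarith [hoff_le x z hxz]) (by linarith)
  exact (sum_negMulLog_add_mul_log_marginal_le P (fanoKernel ε) hP (fanoKernel_nonneg h0 h1)
    (sum_fanoKernel_le_one h0) hsupp).trans (sum_neg_mul_log_fanoKernel_le P h0 h1 hdiag hε)

end FanoKernel

lemma sum_sum_mul_sum_fiber {α β : Type*} [Fintype α] [Fintype β] (p : α × β → ℝ) (f : β → α)
    (g : α → α → ℝ) :
    ∑ x, ∑ z, g x z * ∑ y ∈ univ.filter (fun y => f y = z), p (x, y) =
      ∑ w, g w.1 (f w.2) * p w := by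
  rw [Fintype.sum_prod_type]
  refine sum_congr rfl fun x _ => ?_
  simp_rw [mul_sum]
  rw [← sum_fiberwise univ f (fun y => g x (f y) * p (x, y))]
  refine sum_congr rfl fun z _ => sum_congr rfl fun y hy => ?_
  rw [(mem_filter.1 hy).2]

theorem fano_inequality_general
    {𝒳 𝒴 : Type*} [Fintype 𝒳] [Fintype 𝒴]
    (p : 𝒳 × 𝒴 → ℝ) (hp : ∀ z, 0 ≤ p z) (hp1 : ∑ z : 𝒳 × 𝒴, p z = 1)
    (Xhat : 𝒴 → 𝒳)
    -- probability of error `P(e = 1)`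
    (Pe : ℝ) (hPe : Pe = ∑ z ∈ univ.filter (fun z : 𝒳 × 𝒴 => z.1 ≠ Xhat z.2), p z)
    -- binary entropy of the error variable `e`
    (He : ℝ) (hHe : He = Real.negMulLog Pe + Real.negMulLog (1 - Pe))
    -- joint law of `(X, X̂(Y))` and marginal law of `X̂(Y)`
    (Pj : 𝒳 → 𝒳 → ℝ) (hPj : ∀ x z, Pj x z = ∑ y ∈ univ.filter (fun y => Xhat y = z), p (x, y))
    (Pz : 𝒳 → ℝ) (hPz : ∀ z, Pz z = ∑ x : 𝒳, Pj x z)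
    -- conditional entropy `H(X | X̂(Y))`
    (Hcond : ℝ)
    (hHcond : Hcond = ∑ x : 𝒳, ∑ z : 𝒳,
      (Real.negMulLog (Pj x z) + Pj x z * Real.log (Pz z))) :
    Hcond ≤ He + Pe * Real.log ((Fintype.card 𝒳 : ℝ) - 1) ∧
    He + Pe * Real.log ((Fintype.card 𝒳 : ℝ) - 1)
      ≤ Real.log 2 + Pe * Real.log (Fintype.card 𝒳) := by
  have hpush : ∀ g : 𝒳 → 𝒳 → ℝ, ∑ x, ∑ z, g x z * Pj x z = ∑ w, g w.1 (Xhat w.2) * p w := by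
    simpa only [hPj] using sum_sum_mul_sum_fiber p Xhat
  have hPj0 : ∀ x z, 0 ≤ Pj x z := fun x z => hPj x z ▸ sum_nonneg fun y _ => hp (x, y)
  have hPj1 : ∑ x, ∑ z, Pj x z = 1 := by simpa [hp1] using hpush fun _ _ => 1
  have hPjε : ∑ x, ∑ z, (if x = z then 0 else Pj x z) = Pe := by
    rw [hPe, sum_filter]
    simpa [ite_mul] using hpush fun x z => if x = z then 0 else 1
  have hPe0 : 0 ≤ Pe := hPe ▸ sum_nonneg fun w _ => hp w
  have hfano := sum_negMulLog_add_mul_log_marginal_le_qaryEntropy Pj hPj0 hPj1 hPjε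
  rw [qaryEntropy, binEntropy_eq_negMulLog_add_negMulLog_one_sub, ← hHe] at hfano
  subst hHcond hHe
  constructor
  · simp only [hPz]
    push_cast at hfano
    linarith
  · rw [← binEntropy_eq_negMulLog_add_negMulLog_one_sub]
    exact add_le_add binEntropy_le_log_two
      (mul_le_mul_of_nonneg_left (log_natCast_sub_one_le _) hPe0)

/-- **Fano's inequality.** Let `X, Y` be random variables on finite sets `𝒳, 𝒴` with joint
probability mass function `p`, and `X̂ : 𝒴 → 𝒳` a classification rule.  With
`e = 1{X ≠ X̂(Y)}`, `Pe = P(e = 1)`, `H(e)` the binary entropy of `e` and `H(X | X̂(Y))` the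
conditional entropy of `X` given `X̂(Y)` (natural logarithms, `0 log 0 = 0`), one has
`H(X | X̂(Y)) ≤ H(e) + Pe · log(|𝒳| - 1) ≤ log 2 + Pe · log |𝒳|`. -/
theorem fano_inequality
    {𝒳 𝒴 : Type*} [Fintype 𝒳] [Fintype 𝒴] [Nonempty 𝒳] [Nonempty 𝒴]
    (p : 𝒳 × 𝒴 → ℝ) (hp : ∀ z, 0 ≤ p z) (hp1 : ∑ z : 𝒳 × 𝒴, p z = 1)
    (Xhat : 𝒴 → 𝒳)
    -- probability of error `P(e = 1)`
    (Pe : ℝ) (hPe : Pe = ∑ z ∈ univ.filter (fun z : 𝒳 × 𝒴 => z.1 ≠ Xhat z.2), p z)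
    -- binary entropy of the error variable `e`
    (He : ℝ) (hHe : He = Real.negMulLog Pe + Real.negMulLog (1 - Pe))
    -- joint law of `(X, X̂(Y))` and marginal law of `X̂(Y)`
    (Pj : 𝒳 → 𝒳 → ℝ) (hPj : ∀ x z, Pj x z = ∑ y ∈ univ.filter (fun y => Xhat y = z), p (x, y))
    (Pz : 𝒳 → ℝ) (hPz : ∀ z, Pz z = ∑ x : 𝒳, Pj x z)
    -- conditional entropy `H(X | X̂(Y))`
    (Hcond : ℝ)
    (hHcond : Hcond = ∑ x : 𝒳, ∑ z : 𝒳,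
      (Real.negMulLog (Pj x z) + Pj x z * Real.log (Pz z))) :
    Hcond ≤ He + Pe * Real.log ((Fintype.card 𝒳 : ℝ) - 1) ∧
    He + Pe * Real.log ((Fintype.card 𝒳 : ℝ) - 1)
      ≤ Real.log 2 + Pe * Real.log (Fintype.card 𝒳) :=
  fano_inequality_general p hp hp1 Xhat Pe hPe He hHe Pj hPj Pz hPz Hcond hHcond
end
end

section
/- (Gilbert–Varshamov-type packing of the hypercube) For any integer k ≥ 1, there exists a family (x_i)_{i≤N} of N = ⌈exp(k/8)⌉ points in {0,1}^k such that for all i ≠ j, the Hamming distance d(x_i, x_j) = Σ_{l≤k} 1{(x_i)_l ≠ (x_j)_l} exceeds k/4. -/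
/-!
A family of points of `{0,1}^k` with pairwise Hamming distances `> m` that has maximum size is
also an `m`-covering, so its size times the volume `∑_{i ≤ m} C(k, i)` of a Hamming ball of
radius `m` is at least `2^k`. For `m = ⌊k/4⌋` the Chernoff-type bound
`∑_{i ≤ m} C(k, i) ≤ 3^m (4/3)^k` makes this volume at most `2^k e^{-k/8}`.
-/

open Real Finset

noncomputable section
open scoped Classical

theorem Finset.exists_pairwise_and_card_le_card_mul {α : Type*} [Fintype α] (R : α → α → Prop)
    [Std.Symm R] [Std.Irrefl R] {V : ℕ} (hV : ∀ y, #{z | ¬ R y z} ≤ V) :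
    ∃ S : Finset α, (S : Set α).Pairwise R ∧ Fintype.card α ≤ #S * V := by
  obtain ⟨S, hS, hmax⟩ := exists_max_image ({S | (S : Set α).Pairwise R} : Finset (Finset α))
    card ⟨∅, by simp⟩
  rw [mem_filter] at hS
  refine ⟨S, hS.2, ?_⟩
  have hcover : univ ⊆ S.biUnion fun y => ({z | ¬ R y z} : Finset α) := by
    intro z _
    by_contra hz
    simp only [mem_biUnion, mem_filter, mem_univ, true_and, not_exists, not_and,
      not_not] at hz
    have hzS : z ∉ S := fun h => Std.Irrefl.irrefl z (hz z h)
    have := hmax (insert z S) (by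
      simp only [mem_filter, mem_univ, true_and, coe_insert]
      exact hS.2.insert_of_symm fun y hy _ => Std.Symm.symm _ _ (hz y hy))
    rw [card_insert_of_notMem hzS] at this
    omega
  calc Fintype.card α = #(univ : Finset α) := card_univ.symm
    _ ≤ _ := card_le_card hcover
    _ ≤ ∑ y ∈ S, #({z | ¬ R y z} : Finset α) := card_biUnion_le
    _ ≤ #S * V := sum_le_card_nsmul _ _ _ fun y _ => hV y

theorem Finset.exists_pairwise_fin_of_le_card {α : Type*} {R : α → α → Prop} {S : Finset α}
    (hS : (S : Set α).Pairwise R) {n : ℕ} (hn : n ≤ #S) :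
    ∃ x : Fin n → α, Pairwise fun i j => R (x i) (x j) := by
  obtain ⟨T, hTS, hT⟩ := exists_subset_card_eq hn
  let e := (T.equivFinOfCardEq hT).symm
  exact ⟨fun i => e i, fun i j hij => hS (hTS (e i).2) (hTS (e j).2)
    fun h => hij (e.injective (Subtype.ext h))⟩

theorem card_hammingDist_le_le_sum_choose {ι : Type*} [Fintype ι] [DecidableEq ι]
    (y : ι → Bool) (m : ℕ) :
    #{z | hammingDist y z ≤ m} ≤ ∑ i ∈ range (m + 1), (Fintype.card ι).choose i := by
  calc #{z | hammingDist y z ≤ m}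
      ≤ #((range (m + 1)).biUnion fun i => powersetCard i (univ : Finset ι)) := by
        refine card_le_card_of_injOn (fun z => ({l | y l ≠ z l} : Finset ι)) (fun z hz => ?_)
          fun z₁ _ z₂ _ h => ?_
        · simp only [coe_filter, mem_univ, true_and] at hz
          simpa [Nat.lt_succ_iff, hammingDist] using hz
        · funext l
          have := congrArg (l ∈ ·) h
          simp only [mem_filter, mem_univ, true_and, eq_iff_iff] at this
          revert this
          cases y l <;> cases z₁ l <;> cases z₂ l <;> simp
    _ ≤ ∑ i ∈ range (m + 1), #(powersetCard i (univ : Finset ι)) := card_biUnion_le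
    _ = _ := by simp [card_powersetCard]

theorem sum_range_choose_mul_pow_le {t : ℝ} (ht₀ : 0 ≤ t) (ht₁ : t ≤ 1) {m n : ℕ}
    (hmn : m ≤ n) : (∑ i ∈ range (m + 1), (n.choose i : ℝ)) * t ^ m ≤ (t + 1) ^ n := by
  rw [add_pow, sum_mul]
  calc ∑ i ∈ range (m + 1), (n.choose i : ℝ) * t ^ m
      ≤ ∑ i ∈ range (m + 1), t ^ i * 1 ^ (n - i) * n.choose i := by
        refine sum_le_sum fun i hi => ?_
        rw [one_pow, mul_one, mul_comm]
        refine mul_le_mul_of_nonneg_right ?_ (by positivity)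
        exact pow_le_pow_of_le_one ht₀ ht₁ (Nat.lt_succ_iff.mp (mem_range.mp hi))
    _ ≤ _ := sum_le_sum_of_subset_of_nonneg (range_subset_range.2 (by omega))
        fun _ _ _ => by positivity

theorem exp_mul_sum_range_choose_le (k : ℕ) :
    exp ((k : ℝ) / 8) * ∑ i ∈ range (k / 4 + 1), (k.choose i : ℝ) ≤ 2 ^ k := by
  set V := ∑ i ∈ range (k / 4 + 1), (k.choose i : ℝ)
  have hV : V ≤ 3 ^ (k / 4) * (4 / 3) ^ k := by
    have := sum_range_choose_mul_pow_le (t := 1 / 3) (by norm_num) (by norm_num)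
      (Nat.div_le_self k 4)
    rw [one_div, inv_pow, ← div_eq_mul_inv, div_le_iff₀ (by positivity)] at this
    norm_num at this
    linarith
  have h3 : ((3 : ℝ) ^ (k / 4)) ^ 8 ≤ 9 ^ k := by
    rw [← pow_mul, show (9 : ℝ) = 3 ^ 2 by norm_num, ← pow_mul]
    exact pow_le_pow_right₀ (by norm_num) (by omega)
  -- `e ≤ 3^6 / 2^8` is exactly what the exponents `1/8` and `1/4` need.
  have he : exp 1 ≤ 729 / 256 := by linarith [exp_one_lt_d9]
  refine (pow_le_pow_iff_left₀ (by positivity) (by positivity) (by norm_num : 8 ≠ 0)).mp ?_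
  calc (exp ((k : ℝ) / 8) * V) ^ 8 = exp 1 ^ k * V ^ 8 := by
        rw [mul_pow, ← exp_nat_mul, ← exp_nat_mul]; ring_nf
    _ ≤ (729 / 256) ^ k * (3 ^ (k / 4) * (4 / 3) ^ k) ^ 8 := by gcongr
    _ = (729 / 256) ^ k * (3 ^ (k / 4)) ^ 8 * ((4 / 3) ^ 8) ^ k := by
        rw [mul_pow, ← pow_mul ((4 : ℝ) / 3) k 8, mul_comm k 8, pow_mul]; ring
    _ ≤ (729 / 256) ^ k * 9 ^ k * ((4 / 3) ^ 8) ^ k := by gcongr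
    _ = (2 ^ k) ^ 8 := by rw [← mul_pow, ← mul_pow, ← pow_mul, mul_comm k, pow_mul]; norm_num

theorem hypercube_packing_general (k : ℕ) :
    ∃ x : Fin (⌈Real.exp ((k : ℝ) / 8)⌉₊) → (Fin k → Bool),
      ∀ i j, i ≠ j →
        (k : ℝ) / 4 < ((univ.filter fun l : Fin k => x i l ≠ x j l).card : ℝ) := by
  set V := ∑ i ∈ range (k / 4 + 1), k.choose i
  have : Std.Symm fun y z : Fin k → Bool => k / 4 < hammingDist y z :=
    ⟨fun y z h => hammingDist_comm y z ▸ h⟩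
  have : Std.Irrefl fun y z : Fin k → Bool => k / 4 < hammingDist y z := ⟨by simp⟩
  obtain ⟨S, hS, hcard⟩ := exists_pairwise_and_card_le_card_mul
    (fun y z : Fin k → Bool => k / 4 < hammingDist y z)
    fun y => by simpa using card_hammingDist_le_le_sum_choose y (k / 4)
  have hN : ⌈exp ((k : ℝ) / 8)⌉₊ ≤ #S := by
    have hV : 0 < V := sum_pos' (fun _ _ => Nat.zero_le _) ⟨0, by simp⟩
    refine Nat.ceil_le.mpr (le_of_mul_le_mul_right ?_ (Nat.cast_pos.mpr hV : (0 : ℝ) < V))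
    calc exp ((k : ℝ) / 8) * V ≤ 2 ^ k := by exact_mod_cast exp_mul_sum_range_choose_le k
      _ ≤ #S * V := by exact_mod_cast (by simpa using hcard)
  obtain ⟨x, hx⟩ := exists_pairwise_fin_of_le_card hS hN
  refine ⟨x, fun i j hij => ?_⟩
  have := (Nat.div_lt_iff_lt_mul (by norm_num : 0 < 4)).mp (hx hij)
  rw [div_lt_iff₀ (by norm_num)]
  exact_mod_cast this

/-- **Gilbert–Varshamov-type packing of the hypercube.** For any `k ≥ 1` there exist
`N = ⌈exp(k/8)⌉` points of `{0,1}^k` whose pairwise Hamming distances all exceed `k/4`. -/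
theorem hypercube_packing (k : ℕ) (hk : 1 ≤ k) :
    ∃ x : Fin (⌈Real.exp ((k : ℝ) / 8)⌉₊) → (Fin k → Bool),
      ∀ i j, i ≠ j →
        (k : ℝ) / 4 < ((univ.filter fun l : Fin k => x i l ≠ x j l).card : ℝ) :=
  hypercube_packing_general k
end
end

section
/- (Packing of infinite-dimensional ellipsoids) Let H = L²(ρ) and K a positive self-adjoint compact operator on H with ordered eigenvalues (λ_i)_{i∈ℕ} (with repetition) and orthonormal eigenvectors (u_i). Let ℱ = {f ∈ H : ‖K^{−1/2}f‖ ≤ M} for some M > 0. Then for any k ∈ ℕ*, there exist N ≥ exp(k/8) elements (f_i)_{i≤N} of ℱ such that for all i ≠ j, kM²/(Σ_{l≤k} λ_l^{−1}) ≤ ‖f_i − f_j‖² ≤ 4kM²/(Σ_{l≤k} λ_l^{−1}). -/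
/-!
Gilbert–Varshamov: a maximal subset of `{±1}^k` with pairwise Hamming distances `≥ k/4` has its
Hamming balls of radius `k/4` covering the cube. Weighting points by `t^(dist)` with
`t = (3/4)^4` bounds such a ball by `(4/3)^k (337/256)^k`, so the set has at least
`(384/337)^k ≥ e^(k/8)` points. Mapping `a ∈ {±1}^k` to `(M/c) ∑ a_l u_l` with
`c² = ∑_{l<k} λ_l⁻¹` puts every point on the boundary of the ellipsoid, and by orthonormality
the squared distances are `4 (M/c)²` times the Hamming distances, which lie in `[k/4, k]`.
-/

open Real Finset

theorem exists_finset_pairwise_not_forall_exists_rel {α : Type*} [Fintype α] (R : α → α → Prop)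
    (hrefl : ∀ x, R x x) (hsymm : ∀ x y, R x y → R y x) :
    ∃ S : Finset α, (S : Set α).Pairwise (fun a b => ¬ R a b) ∧ ∀ x, ∃ s ∈ S, R x s := by
  classical
  obtain ⟨S, hS, hmax⟩ :=
    (univ.filter fun S : Finset α => (S : Set α).Pairwise fun a b => ¬ R a b).exists_max_image
      card ⟨∅, by simp⟩
  have hSpair := (mem_filter.mp hS).2
  refine ⟨S, hSpair, fun x => ?_⟩
  by_contra! hfar
  have hxS : x ∉ S := fun hx => hfar x hx (hrefl x)
  have hins : ((insert x S : Finset α) : Set α).Pairwise fun a b => ¬ R a b := by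
    rw [coe_insert, Set.pairwise_insert]
    exact ⟨hSpair, fun s hs _ => ⟨hfar s hs, fun h => hfar s hs (hsymm s x h)⟩⟩
  have hcard := hmax _ (mem_filter.mpr ⟨mem_univ _, hins⟩)
  rw [card_insert_of_notMem hxS] at hcard
  omega

section

variable {ι : Type*} [Fintype ι] {H : Type*} [NormedAddCommGroup H] [InnerProductSpace ℝ H]

theorem sum_pow_hammingDist [DecidableEq ι] (s : ι → Bool) (t : ℝ) :
    ∑ x : ι → Bool, t ^ hammingDist x s = (1 + t) ^ Fintype.card ι := by
  calc ∑ x : ι → Bool, t ^ hammingDist x s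
      = ∑ x : ι → Bool, ∏ i, if x i ≠ s i then t else 1 := by
        refine sum_congr rfl fun x _ => ?_
        rw [← prod_filter, prod_const, hammingDist]
    _ = ∏ i, ∑ b : Bool, if b ≠ s i then t else 1 :=
        (Fintype.prod_sum fun i b => if b ≠ s i then t else 1).symm
    _ = (1 + t) ^ Fintype.card ι := by
        rw [← card_univ, ← prod_const]
        refine prod_congr rfl fun i _ => ?_
        cases s i <;> simp [add_comm]

theorem card_filter_hammingDist_le_mul_pow_le [DecidableEq ι] (s : ι → Bool) {t : ℝ}
    (ht₀ : 0 ≤ t) (ht₁ : t ≤ 1) (m : ℕ) :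
    #{x | hammingDist x s ≤ m} * t ^ m ≤ (1 + t) ^ Fintype.card ι := by
  rw [← sum_pow_hammingDist s t, ← nsmul_eq_mul, ← sum_const]
  calc ∑ _x ∈ {x | hammingDist x s ≤ m}, t ^ m
      ≤ ∑ x ∈ {x | hammingDist x s ≤ m}, t ^ hammingDist x s :=
        sum_le_sum fun x hx => pow_le_pow_of_le_one ht₀ ht₁ (mem_filter.mp hx).2
    _ ≤ ∑ x : ι → Bool, t ^ hammingDist x s :=
        sum_le_sum_of_subset_of_nonneg (subset_univ _) fun _ _ _ => by positivity

theorem exp_one_div_eight_le : exp (1 / 8) ≤ 384 / 337 := by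
  refine le_of_pow_le_pow_left₀ (n := 8) (by norm_num) (by norm_num) ?_
  rw [← exp_nat_mul]
  norm_num
  linarith [exp_one_lt_d9]

theorem exists_hammingDist_packing (k : ℕ) (hk : 1 ≤ k) :
    ∃ S : Finset (Fin k → Bool), exp (k / 8) ≤ #S ∧
      (S : Set (Fin k → Bool)).Pairwise fun a b => k ≤ 4 * hammingDist a b := by
  obtain ⟨S, hSsep, hScover⟩ := exists_finset_pairwise_not_forall_exists_rel
    (fun x y : Fin k → Bool => 4 * hammingDist x y < k) (fun x => by simp; omega)
    (fun x y h => by rwa [hammingDist_comm])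
  refine ⟨S, ?_, hSsep.mono' fun a b h => not_lt.mp h⟩
  have hball (s : Fin k → Bool) : (#{x | hammingDist x s ≤ k / 4} : ℝ) * (3 / 4) ^ k ≤
      (337 / 256) ^ k := by
    have hpow : ((3 : ℝ) / 4) ^ k ≤ ((3 / 4) ^ 4) ^ (k / 4) := by
      rw [← pow_mul]
      exact pow_le_pow_of_le_one (by norm_num) (by norm_num) (Nat.mul_div_le k 4)
    calc (#{x | hammingDist x s ≤ k / 4} : ℝ) * (3 / 4) ^ k
        ≤ #{x | hammingDist x s ≤ k / 4} * ((3 / 4) ^ 4) ^ (k / 4) := by gcongr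
      _ ≤ (1 + (3 / 4) ^ 4) ^ Fintype.card (Fin k) :=
        card_filter_hammingDist_le_mul_pow_le s (by norm_num) (by norm_num) _
      _ = (337 / 256) ^ k := by norm_num
  have hcount : (2 : ℝ) ^ k ≤ ∑ s ∈ S, (#{x | hammingDist x s ≤ k / 4} : ℝ) := by
    have hcover : (univ : Finset (Fin k → Bool)) ⊆
        S.biUnion fun s => {x | hammingDist x s ≤ k / 4} := fun x _ => by
      obtain ⟨s, hs, hxs⟩ := hScover x
      exact mem_biUnion.mpr ⟨s, hs, mem_filter.mpr ⟨mem_univ _, by omega⟩⟩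
    exact_mod_cast (by simpa using card_le_card hcover : 2 ^ k ≤ _).trans card_biUnion_le
  have hS : ((3 : ℝ) / 2) ^ k ≤ #S * (337 / 256) ^ k :=
    calc ((3 : ℝ) / 2) ^ k = 2 ^ k * (3 / 4) ^ k := by rw [← mul_pow]; norm_num
      _ ≤ ∑ s ∈ S, (#{x | hammingDist x s ≤ k / 4} : ℝ) * (3 / 4) ^ k := by
        rw [← sum_mul]; gcongr
      _ ≤ ∑ _s ∈ S, ((337 : ℝ) / 256) ^ k := sum_le_sum fun s _ => hball s
      _ = #S * (337 / 256) ^ k := by rw [sum_const, nsmul_eq_mul]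
  calc exp (k / 8) = exp (1 / 8) ^ k := by rw [← exp_nat_mul]; ring_nf
    _ ≤ (384 / 337) ^ k := by gcongr; exact exp_one_div_eight_le
    _ = ((3 : ℝ) / 2) ^ k / (337 / 256) ^ k := by rw [← div_pow]; norm_num
    _ ≤ #S := by rw [div_le_iff₀ (by positivity)]; exact hS

theorem Orthonormal.norm_sum_smul_sq {v : ι → H} (hv : Orthonormal ℝ v) (c : ι → ℝ) :
    ‖∑ i, c i • v i‖ ^ 2 = ∑ i, c i ^ 2 := by
  rw [← real_inner_self_eq_norm_sq, hv.inner_sum]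
  simp [sq]

def cubeVertex (v : ι → H) (r : ℝ) (a : ι → Bool) : H :=
  ∑ i, (if a i then r else -r) • v i

theorem norm_cubeVertex_sub_sq {v : ι → H} (hv : Orthonormal ℝ v) (r : ℝ) (a b : ι → Bool) :
    ‖cubeVertex v r a - cubeVertex v r b‖ ^ 2 = 4 * r ^ 2 * hammingDist a b := by
  have hterm (i : ι) : ((if a i then r else -r) - if b i then r else -r) ^ 2 =
      if a i ≠ b i then 4 * r ^ 2 else 0 := by
    cases a i <;> cases b i <;> simp <;> ring
  rw [cubeVertex, cubeVertex, ← sum_sub_distrib]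
  simp_rw [← sub_smul]
  rw [hv.norm_sum_smul_sq, sum_congr rfl fun i _ => hterm i, sum_ite, sum_const_zero, add_zero,
    sum_const, nsmul_eq_mul, hammingDist, mul_comm]

end

/-- `u` and `lam` are the eigenvectors and eigenvalues of `K`; `f = ∑_{l<k} a_l • u_l` lies in
`ℱ = {f : ‖K^{-1/2} f‖ ≤ M}` iff `∑_{l<k} a_l² / λ_l ≤ M²`. -/
theorem ellipsoid_packing_general
    {H : Type*} [NormedAddCommGroup H] [InnerProductSpace ℝ H]
    (u : ℕ → H) (hu : Orthonormal ℝ u)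
    (lam : ℕ → ℝ) (hpos : ∀ i, 0 < lam i)
    (M : ℝ) (k : ℕ) (hk : 1 ≤ k) :
    ∃ N : ℕ, Real.exp ((k : ℝ) / 8) ≤ N ∧
      ∃ f : Fin N → H,
        (∀ i, ∃ a : Fin k → ℝ,
          f i = ∑ l : Fin k, a l • u l ∧ ∑ l : Fin k, (a l) ^ 2 / lam l ≤ M ^ 2) ∧
        ∀ i j, i ≠ j →
          (k : ℝ) * M ^ 2 / (∑ l : Fin k, (lam l)⁻¹) ≤ ‖f i - f j‖ ^ 2 ∧
          ‖f i - f j‖ ^ 2 ≤ 4 * k * M ^ 2 / (∑ l : Fin k, (lam l)⁻¹) := by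
  obtain ⟨S, hScard, hSsep⟩ := exists_hammingDist_packing k hk
  set c := ∑ l : Fin k, (lam l)⁻¹
  have hc : 0 < c := sum_pos (fun l _ => inv_pos.mpr (hpos l)) ⟨⟨0, hk⟩, mem_univ _⟩
  set r := M / √c
  have hr : r ^ 2 = M ^ 2 / c := by rw [div_pow, sq_sqrt hc.le]
  let a (i : Fin #S) : Fin k → Bool := S.equivFin.symm i
  have ha : Function.Injective a := Subtype.val_injective.comp S.equivFin.symm.injective
  refine ⟨#S, hScard, fun i => cubeVertex (fun l : Fin k => u l) r (a i),
    fun i => ⟨_, rfl, ?_⟩, fun i j hij => ?_⟩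
  · have hsq (l : Fin k) : (if a i l then r else -r) ^ 2 / lam l = r ^ 2 * (lam l)⁻¹ := by
      split_ifs <;> simp [div_eq_mul_inv]
    rw [sum_congr rfl fun l _ => hsq l, ← mul_sum, hr, div_mul_cancel₀ _ hc.ne']
  · have hv : Orthonormal ℝ fun l : Fin k => u l := hu.comp _ Fin.val_injective
    dsimp only
    rw [norm_cubeVertex_sub_sq hv, hr]
    have hsep : (k : ℝ) ≤ 4 * hammingDist (a i) (a j) := by
      exact_mod_cast hSsep (S.equivFin.symm i).2 (S.equivFin.symm j).2 (ha.ne hij)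
    have hle : (hammingDist (a i) (a j) : ℝ) ≤ k := by
      exact_mod_cast (hammingDist_le_card_fintype.trans_eq (Fintype.card_fin k))
    have hq : 0 ≤ M ^ 2 / c := by positivity
    constructor <;> rw [mul_div_assoc] <;> nlinarith

/-- **Packing of infinite-dimensional ellipsoids.** Let `H` be a Hilbert space, `(u_i)` an
orthonormal family of eigenvectors of a positive compact operator with ordered eigenvalues
`(λ_i)`, and `ℱ = {f : ‖K^{-1/2} f‖ ≤ M}`; a function `f = ∑_{l<k} a_l • u_l` belongs to `ℱ`
iff `∑_{l<k} a_l² / λ_l ≤ M²`.  For every `k ≥ 1` there are `N ≥ exp(k/8)` elements of `ℱ`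
with pairwise squared distances between `k M² / ∑_{l<k} λ_l⁻¹` and `4 k M² / ∑_{l<k} λ_l⁻¹`. -/
theorem ellipsoid_packing
    {H : Type*} [NormedAddCommGroup H] [InnerProductSpace ℝ H] [CompleteSpace H]
    (u : ℕ → H) (hu : Orthonormal ℝ u)
    (lam : ℕ → ℝ) (hpos : ∀ i, 0 < lam i) (hdec : Antitone lam)
    (M : ℝ) (hM : 0 < M) (k : ℕ) (hk : 1 ≤ k) :
    ∃ N : ℕ, Real.exp ((k : ℝ) / 8) ≤ N ∧
      ∃ f : Fin N → H,
        (∀ i, ∃ a : Fin k → ℝ,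
          f i = ∑ l : Fin k, a l • u l ∧ ∑ l : Fin k, (a l) ^ 2 / lam l ≤ M ^ 2) ∧
        ∀ i j, i ≠ j →
          (k : ℝ) * M ^ 2 / (∑ l : Fin k, (lam l)⁻¹) ≤ ‖f i - f j‖ ^ 2 ∧
          ‖f i - f j‖ ^ 2 ≤ 4 * k * M ^ 2 / (∑ l : Fin k, (lam l)⁻¹) :=
  ellipsoid_packing_general u hu lam hpos M k hk
end

section
/- (Order-preservation step for the median surrogate) Let 𝒴 be finite, p ∈ 𝒫(𝒴), θ ∈ ℝ^𝒴, and let σ be the transposition of two elements y, z ∈ 𝒴, with θ_σ defined by (θ_σ)_{y'} = θ_{σ(y')}. Then ℛ_S(θ) − ℛ_S(θ_σ) = (p(y) − p(z))·(√(A + 1 − 2θ_y) − √(A + 1 − 2θ_z)), where A = Σ_{y'∈𝒴} θ_{y'}² and ℛ_S(θ) = Σ_{y'} p(y')‖θ − e_{y'}‖. -/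
open Real

/-! Since `‖θ - e_w‖ = √(‖θ‖² + 1 - 2 θ_w)` and the swap preserves `‖θ‖`, the two risks are
`∑ p_w g(w)` and `∑ p_w g(σ w)` for the same function `g`, which differ only in the terms at
`y` and `z`. -/

theorem EuclideanSpace.norm_sub_single_one {ι : Type*} [Fintype ι] [DecidableEq ι]
    (ξ : EuclideanSpace ℝ ι) (i : ι) :
    ‖ξ - EuclideanSpace.single i (1 : ℝ)‖ = √(‖ξ‖ ^ 2 + 1 - 2 * ξ i) := by
  rw [← Real.sqrt_sq (norm_nonneg _), norm_sub_sq_real, EuclideanSpace.inner_single_right,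
    PiLp.norm_single]
  simp only [conj_trivial, one_mul, norm_one, one_pow]
  ring_nf

theorem EuclideanSpace.norm_sq_eq_sum_sq {ι : Type*} [Fintype ι] (ξ : EuclideanSpace ℝ ι) :
    ‖ξ‖ ^ 2 = ∑ i, ξ i ^ 2 := by
  simp [EuclideanSpace.norm_sq_eq]

theorem EuclideanSpace.norm_eq_of_apply_eq_comp_equiv {ι : Type*} [Fintype ι]
    (ξ η : EuclideanSpace ℝ ι) (e : ι ≃ ι) (h : ∀ i, η i = ξ (e i)) : ‖η‖ = ‖ξ‖ := by
  simp only [EuclideanSpace.norm_eq, h]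
  rw [e.sum_comp (fun i => ‖ξ i‖ ^ 2)]

theorem Fintype.sum_mul_sub_sum_mul_swap {ι R : Type*} [Fintype ι] [DecidableEq ι] [CommRing R]
    (f g : ι → R) (a b : ι) :
    ∑ i, f i * g i - ∑ i, f i * g (Equiv.swap a b i) = (f a - f b) * (g a - g b) := by
  rcases eq_or_ne a b with rfl | hab
  · simp
  rw [← Finset.sum_sub_distrib, Fintype.sum_eq_add a b hab]
  · simp only [Equiv.swap_apply_left, Equiv.swap_apply_right]
    ring
  · rintro i ⟨hia, hib⟩
    rw [Equiv.swap_apply_of_ne_of_ne hia hib, sub_self]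

theorem median_surrogate_swap_general
    {𝒴 : Type*} [Fintype 𝒴] [DecidableEq 𝒴]
    (p : 𝒴 → ℝ)
    (RS : EuclideanSpace ℝ 𝒴 → ℝ)
    (hRS : ∀ θ, RS θ = ∑ y' : 𝒴, p y' * ‖θ - EuclideanSpace.single y' (1 : ℝ)‖)
    (y z : 𝒴)
    (θ θσ : EuclideanSpace ℝ 𝒴) (hθσ : ∀ y', θσ y' = θ (Equiv.swap y z y'))
    (A : ℝ) (hA : A = ∑ y' : 𝒴, (θ y') ^ 2) :
    RS θ - RS θσ
      = (p y - p z) * (Real.sqrt (A + 1 - 2 * θ y) - Real.sqrt (A + 1 - 2 * θ z)) := by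
  have hθ_norm : ‖θ‖ ^ 2 = A := by rw [hA, EuclideanSpace.norm_sq_eq_sum_sq]
  have hθσ_norm : ‖θσ‖ ^ 2 = A := by
    rw [EuclideanSpace.norm_eq_of_apply_eq_comp_equiv θ θσ _ hθσ, hθ_norm]
  simp only [hRS, EuclideanSpace.norm_sub_single_one, hθ_norm, hθσ_norm, hθσ]
  exact Fintype.sum_mul_sub_sum_mul_swap p (fun w => √(A + 1 - 2 * θ w)) y z

/-- **Order-preservation step for the median surrogate.** For the surrogate risk
`ℛ_S(θ) = ∑_{y'} p(y') ‖θ - e_{y'}‖` on `ℝ^𝒴` and the swap `σ` of two labels `y ≠ z`,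
`ℛ_S(θ) - ℛ_S(θ_σ) = (p(y) - p(z)) (√(A + 1 - 2θ_y) - √(A + 1 - 2θ_z))` where
`A = ∑_{y'} θ_{y'}²`. -/
theorem median_surrogate_swap
    {𝒴 : Type*} [Fintype 𝒴] [DecidableEq 𝒴]
    (p : 𝒴 → ℝ) (hp : ∀ y, 0 ≤ p y) (hp1 : ∑ y : 𝒴, p y = 1)
    (RS : EuclideanSpace ℝ 𝒴 → ℝ)
    (hRS : ∀ θ, RS θ = ∑ y' : 𝒴, p y' * ‖θ - EuclideanSpace.single y' (1 : ℝ)‖)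
    (y z : 𝒴) (hyz : y ≠ z)
    (θ θσ : EuclideanSpace ℝ 𝒴) (hθσ : ∀ y', θσ y' = θ (Equiv.swap y z y'))
    (A : ℝ) (hA : A = ∑ y' : 𝒴, (θ y') ^ 2) :
    RS θ - RS θσ
      = (p y - p z) * (Real.sqrt (A + 1 - 2 * θ y) - Real.sqrt (A + 1 - 2 * θ z)) :=
  median_surrogate_swap_general p RS hRS y z θ θσ hθσ A hA
end
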